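/- For every finite simple graph G with at least one vertex, sdim(G + K_1) > sdim G, where G + K_1 is the graph obtained from G by adding one new vertex adjacent to every vertex of G. -/

import Mathlib

/-- A unit-distance embedding of a simple graph `G` in `ℝⁿ`: an injective map sending
adjacent vertices to points at distance 1, such that no other vertex lies on the
closed segment between the endpoints of an edge. -/
def IsUDEmbedding {V : Type*} (G : SimpleGraph V) {n : ℕ}
    (f : V → EuclideanSpace ℝ (Fin n)) : Prop :=
  Function.Injective f ∧
  (∀ ⦃u v⦄, G.Adj u v → dist (f u) (f v) = 1) ∧
  (∀ ⦃u v⦄, G.Adj u v → ∀ w, w ≠ u → w ≠ v → f w ∉ segment ℝ (f u) (f v))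

/-- `G` has a unit-distance embedding in `ℝⁿ`. -/
def HasUDEmbedding {V : Type*} (G : SimpleGraph V) (n : ℕ) : Prop :=
  ∃ f : V → EuclideanSpace ℝ (Fin n), IsUDEmbedding G f

/-- `G` has a unit-distance embedding in `ℝⁿ` whose image lies on a sphere of radius `r`. -/
def HasSphericalEmbeddingRadius {V : Type*} (G : SimpleGraph V) (n : ℕ) (r : ℝ) : Prop :=
  ∃ f : V → EuclideanSpace ℝ (Fin n), IsUDEmbedding G f ∧
    ∃ c : EuclideanSpace ℝ (Fin n), ∀ v, dist (f v) c = r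

/-- `G` has a unit-distance embedding in `ℝⁿ` whose image lies on a sphere
of radius `0 < r < 1`. -/
def HasSphericalEmbedding {V : Type*} (G : SimpleGraph V) (n : ℕ) : Prop :=
  ∃ r : ℝ, 0 < r ∧ r < 1 ∧ HasSphericalEmbeddingRadius G n r

/-- The dimension of a graph: the least `n` such that `G` has a unit-distance
embedding in `ℝⁿ`. -/
noncomputable def graphDim {V : Type*} (G : SimpleGraph V) : ℕ :=
  sInf {n | HasUDEmbedding G n}

/-- The spherical dimension of a graph: the least `n` such that `G` has a unit-distance
embedding in `ℝⁿ` on a sphere of radius strictly between 0 and 1.  By convention the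
spherical dimension of a graph with at most one vertex is `0`. -/
noncomputable def sphericalDim {V : Type*} [Fintype V] (G : SimpleGraph V) : ℕ :=
  if Fintype.card V ≤ 1 then 0 else sInf {n | HasSphericalEmbedding G n}

/-- The join `G + H` of two graphs: disjoint union together with all edges between them. -/
def graphJoin {V W : Type*} (G : SimpleGraph V) (H : SimpleGraph W) :
    SimpleGraph (V ⊕ W) :=
  SimpleGraph.fromRel (fun x y =>
    match x, y with
    | Sum.inl a, Sum.inl b => G.Adj a b
    | Sum.inr a, Sum.inr b => H.Adj a b
    | Sum.inl _, Sum.inr _ => True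
    | Sum.inr _, Sum.inl _ => False)

/-- `H` is a minor of `G` (branch-set formulation, equivalent to being obtainable from `G`
by vertex deletions, edge deletions and edge contractions). -/
def IsMinorOf {W V : Type*} (H : SimpleGraph W) (G : SimpleGraph V) : Prop :=
  ∃ φ : W → Set V,
    (∀ w, (SimpleGraph.induce (φ w) G).Connected) ∧
    (Pairwise fun w w' => Disjoint (φ w) (φ w')) ∧
    (∀ ⦃w w'⦄, H.Adj w w' → ∃ x ∈ φ w, ∃ y ∈ φ w', G.Adj x y)

/-- `H` is a proper minor of `G`: a minor that is not isomorphic to `G`. -/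
def IsProperMinorOf {W V : Type*} (H : SimpleGraph W) (G : SimpleGraph V) : Prop :=
  IsMinorOf H G ∧ ¬ Nonempty (H ≃g G)

/-- `G` is minor minimal with respect to dimension `n`. -/
def MinorMinimalDim {V : Type*} (G : SimpleGraph V) (n : ℕ) : Prop :=
  graphDim G = n ∧
  ∀ (W : Type) [Fintype W] (H : SimpleGraph W), Nonempty W →
    IsProperMinorOf H G → graphDim H < n

/-- `G` is minor minimal with respect to spherical dimension `n`. -/
def MinorMinimalSDim {V : Type*} [Fintype V] (G : SimpleGraph V) (n : ℕ) : Prop :=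
  sphericalDim G = n ∧
  ∀ (W : Type) [Fintype W] (H : SimpleGraph W), Nonempty W →
    IsProperMinorOf H G → sphericalDim H < n

/-- The vertex type of the graph `Sₙ`. -/
def SType : ℕ → Type
  | 0 => Fin 0
  | 1 => Fin 1
  | 2 => Fin 2
  | 3 => Fin 3
  | (n + 4) => Fin (n + 1) ⊕ Fin 3

instance : (n : ℕ) → Fintype (SType n)
  | 0 => inferInstanceAs (Fintype (Fin 0))
  | 1 => inferInstanceAs (Fintype (Fin 1))
  | 2 => inferInstanceAs (Fintype (Fin 2))
  | 3 => inferInstanceAs (Fintype (Fin 3))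
  | (n + 4) => inferInstanceAs (Fintype (Fin (n + 1) ⊕ Fin 3))

/-- The graph `Sₙ`:  `S₁ = ε₁`, `S₂ = ε₂`, `S₃ = ε₃`, and `Sₙ = K_{n-3} + ε₃` for `n ≥ 4`. -/
def SGraph : (n : ℕ) → SimpleGraph (SType n)
  | 0 => ⊥
  | 1 => ⊥
  | 2 => ⊥
  | 3 => ⊥
  | (n + 4) => graphJoin (⊤ : SimpleGraph (Fin (n + 1))) (⊥ : SimpleGraph (Fin 3))


/-!
Take a spherical embedding of `G + K₁` in the least dimension `n`, on the sphere of centre `c`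
and radius `r < 1`, and let `p` be the image of the apex. Every vertex of `G` is at distance `r`
from `c` and `1` from `p`, hence lies in the hyperplane `⟪x - c, p - c⟫ = r² - 1/2`. The slice of
the sphere by this hyperplane is a sphere of radius at most `r` in a copy of `ℝⁿ⁻¹`, so
`sdim G ≤ n - 1`. When `G` has a single vertex, `sdim G = 0 < n`.
-/

open RealInnerProductSpace

section Geometry

variable {E : Type*} [NormedAddCommGroup E] [InnerProductSpace ℝ E]

lemma mem_segment_iff_dist_add_dist_eq {x y z : E} :
    y ∈ segment ℝ x z ↔ dist x y + dist y z = dist x z := by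
  rw [mem_segment_iff_wbtw, dist_add_dist_eq_iff]

lemma Orthonormal.norm_sub_eq_sqrt_two {ι : Type*} {v : ι → E} (hv : Orthonormal ℝ v)
    {i j : ι} (hij : i ≠ j) : ‖v i - v j‖ = √2 := by
  rw [← Real.sqrt_sq (norm_nonneg _), norm_sub_sq_real, hv.1 i, hv.1 j, hv.2 hij]
  norm_num

lemma inner_sub_sub_eq_of_norm_sub_eq_one {c p x : E} {r : ℝ} (hx : ‖x - c‖ = r)
    (hp : ‖p - c‖ = r) (hxp : ‖x - p‖ = 1) : ⟪x - c, p - c⟫ = r ^ 2 - 1 / 2 := by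
  have h := norm_sub_sq_real (x - c) (p - c)
  rw [sub_sub_sub_cancel_right, hxp, hx, hp] at h
  linarith

lemma inner_sub_add_smul_eq_zero {c d x : E} (hd : d ≠ 0) :
    ⟪x - (c + (⟪x - c, d⟫ / ‖d‖ ^ 2) • d), d⟫ = 0 := by
  have : ‖d‖ ≠ 0 := norm_ne_zero_iff.mpr hd
  rw [← sub_sub, inner_sub_left, real_inner_smul_left, real_inner_self_eq_norm_sq]
  field_simp
  ring

lemma norm_sub_add_smul_sq {c d x : E} (hd : d ≠ 0) :
    ‖x - (c + (⟪x - c, d⟫ / ‖d‖ ^ 2) • d)‖ ^ 2 = ‖x - c‖ ^ 2 - ⟪x - c, d⟫ ^ 2 / ‖d‖ ^ 2 := by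
  have : ‖d‖ ≠ 0 := norm_ne_zero_iff.mpr hd
  rw [← sub_sub, norm_sub_sq_real, real_inner_smul_right, norm_smul, Real.norm_eq_abs, mul_pow,
    sq_abs]
  field_simp
  ring

-- The foot of the perpendicular from `x` to the line `c p` does not depend on `x`.
lemma sphere_inter_sphere_center_eq {c p x : E} {r : ℝ} (hx : ‖x - c‖ = r) (hp : ‖p - c‖ = r)
    (hxp : ‖x - p‖ = 1) :
    c + (⟪x - c, p - c⟫ / ‖p - c‖ ^ 2) • (p - c) = c + ((r ^ 2 - 1 / 2) / r ^ 2) • (p - c) := by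
  rw [inner_sub_sub_eq_of_norm_sub_eq_one hx hp hxp, hp]

lemma sub_mem_orthogonal_of_norm_sub_eq_one {c p x : E} {r : ℝ} (hr : r ≠ 0)
    (hx : ‖x - c‖ = r) (hp : ‖p - c‖ = r) (hxp : ‖x - p‖ = 1) :
    x - (c + ((r ^ 2 - 1 / 2) / r ^ 2) • (p - c)) ∈ (ℝ ∙ (p - c))ᗮ := by
  rw [Submodule.mem_orthogonal_singleton_iff_inner_left, ← sphere_inter_sphere_center_eq hx hp hxp]
  exact inner_sub_add_smul_eq_zero (norm_ne_zero_iff.mp (hp ▸ hr))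

lemma norm_sub_eq_of_norm_sub_eq_one {c p x : E} {r : ℝ} (hr : r ≠ 0)
    (hx : ‖x - c‖ = r) (hp : ‖p - c‖ = r) (hxp : ‖x - p‖ = 1) :
    ‖x - (c + ((r ^ 2 - 1 / 2) / r ^ 2) • (p - c))‖ = √(r ^ 2 - (r ^ 2 - 1 / 2) ^ 2 / r ^ 2) := by
  rw [← sphere_inter_sphere_center_eq hx hp hxp, ← Real.sqrt_sq (norm_nonneg _),
    norm_sub_add_smul_sq (norm_ne_zero_iff.mp (hp ▸ hr)), hx, hp,
    inner_sub_sub_eq_of_norm_sub_eq_one hx hp hxp]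

end Geometry

section UDEmbedding

variable {V W : Type*} {G : SimpleGraph V} {n m : ℕ}

lemma graphJoin_adj_inl_inl {H : SimpleGraph W} {a b : V} :
    (graphJoin G H).Adj (Sum.inl a) (Sum.inl b) ↔ G.Adj a b := by
  simp only [graphJoin, SimpleGraph.fromRel_adj, ne_eq, Sum.inl.injEq]
  exact ⟨fun ⟨_, h⟩ => h.elim id G.adj_symm, fun h => ⟨h.ne, Or.inl h⟩⟩

lemma graphJoin_adj_inl_inr {H : SimpleGraph W} (a : V) (b : W) :
    (graphJoin G H).Adj (Sum.inl a) (Sum.inr b) := by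
  simp [graphJoin]

def graphJoinEmbeddingInl (G : SimpleGraph V) (H : SimpleGraph W) : G ↪g graphJoin G H where
  toEmbedding := Function.Embedding.inl
  map_rel_iff' := graphJoin_adj_inl_inl

lemma IsUDEmbedding.pos_dim [Nontrivial V] {f : V → EuclideanSpace ℝ (Fin n)}
    (hf : IsUDEmbedding G f) : 0 < n := by
  rcases Nat.eq_zero_or_pos n with rfl | h
  · exact absurd hf.1.subsingleton (not_subsingleton V)
  · exact h

lemma IsUDEmbedding.comp_embedding {H : SimpleGraph W} {f : W → EuclideanSpace ℝ (Fin n)}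
    (hf : IsUDEmbedding H f) (φ : G ↪g H) : IsUDEmbedding G (f ∘ φ) :=
  ⟨hf.1.comp φ.injective, fun _ _ h => hf.2.1 (φ.map_adj_iff.mpr h),
    fun _ _ h w hwu hwv => hf.2.2 (φ.map_adj_iff.mpr h) (φ w) (φ.injective.ne hwu)
      (φ.injective.ne hwv)⟩

lemma IsUDEmbedding.of_dist_eq {f : V → EuclideanSpace ℝ (Fin n)}
    {g : V → EuclideanSpace ℝ (Fin m)} (hf : IsUDEmbedding G f)
    (hfg : ∀ u v, dist (g u) (g v) = dist (f u) (f v)) : IsUDEmbedding G g := by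
  refine ⟨fun u v huv => hf.1 ?_, fun u v h => (hfg u v).trans (hf.2.1 h),
    fun u v h w hwu hwv => ?_⟩
  · rw [← dist_eq_zero, ← hfg, huv, dist_self]
  · rw [mem_segment_iff_dist_add_dist_eq, hfg, hfg, hfg, ← mem_segment_iff_dist_add_dist_eq]
    exact hf.2.2 h w hwu hwv

lemma isUDEmbedding_of_dist_eq_one {f : V → EuclideanSpace ℝ (Fin n)}
    (hf : ∀ ⦃u v⦄, u ≠ v → dist (f u) (f v) = 1) : IsUDEmbedding G f := by
  refine ⟨fun u v huv => by_contra fun hne => by simpa [huv] using hf hne,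
    fun u v h => hf h.ne, fun u v h w hwu hwv hw => ?_⟩
  have := (mem_segment_iff_dist_add_dist_eq.mp hw)
  rw [hf h.ne, hf hwu.symm, hf hwv] at this
  norm_num at this

end UDEmbedding

section Spherical

variable {V W : Type*} {G : SimpleGraph V} {m : ℕ}

lemma hasSphericalEmbedding_card [Fintype V] (G : SimpleGraph V) :
    HasSphericalEmbedding G (Fintype.card V) := by
  set e := Fintype.equivFin V
  set b := EuclideanSpace.basisFun (Fin (Fintype.card V)) ℝ
  have hs : (0 : ℝ) < √2 := by positivity
  refine ⟨(√2)⁻¹, by positivity, inv_lt_one_of_one_lt₀ Real.one_lt_sqrt_two,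
    fun v => (√2)⁻¹ • b (e v), isUDEmbedding_of_dist_eq_one fun u v huv => ?_, 0, fun v => ?_⟩
  · rw [dist_eq_norm, ← smul_sub, norm_smul, Real.norm_of_nonneg (by positivity),
      b.orthonormal.norm_sub_eq_sqrt_two (e.injective.ne huv), inv_mul_cancel₀ hs.ne']
  · rw [dist_zero_right, norm_smul, Real.norm_of_nonneg (by positivity), b.orthonormal.1, mul_one]

lemma HasSphericalEmbedding.of_graphJoin [Nontrivial V] [Nonempty W] {H : SimpleGraph W}
    (h : HasSphericalEmbedding (graphJoin G H) (m + 1)) : HasSphericalEmbedding G m := by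
  obtain ⟨r, hr0, hr1, f, hf, c, hc⟩ := h
  obtain ⟨w⟩ := ‹Nonempty W›
  set x : V → EuclideanSpace ℝ (Fin (m + 1)) := fun v => f (Sum.inl v)
  set p := f (Sum.inr w)
  set c' := c + ((r ^ 2 - 1 / 2) / r ^ 2) • (p - c)
  set ρ := √(r ^ 2 - (r ^ 2 - 1 / 2) ^ 2 / r ^ 2)
  have hp : ‖p - c‖ = r := (dist_eq_norm _ _).symm.trans (hc _)
  have hx : ∀ v, ‖x v - c‖ = r := fun v => (dist_eq_norm _ _).symm.trans (hc _)
  have hxp : ∀ v, ‖x v - p‖ = 1 := fun v =>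
    (dist_eq_norm _ _).symm.trans (hf.2.1 (graphJoin_adj_inl_inr v w))
  have horth : ∀ v, x v - c' ∈ (ℝ ∙ (p - c))ᗮ := fun v =>
    sub_mem_orthogonal_of_norm_sub_eq_one hr0.ne' (hx v) hp (hxp v)
  have hnorm : ∀ v, ‖x v - c'‖ = ρ := fun v =>
    norm_sub_eq_of_norm_sub_eq_one hr0.ne' (hx v) hp (hxp v)
  have : Fact (Module.finrank ℝ (EuclideanSpace ℝ (Fin (m + 1))) = m + 1) :=
    ⟨finrank_euclideanSpace_fin⟩
  set B := OrthonormalBasis.fromOrthogonalSpanSingleton (𝕜 := ℝ) m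
    (norm_ne_zero_iff.mp (hp ▸ hr0.ne'))
  set g : V → EuclideanSpace ℝ (Fin m) := fun v => B.repr ⟨x v - c', horth v⟩
  have hg : IsUDEmbedding G g :=
    (hf.comp_embedding (graphJoinEmbeddingInl G H)).of_dist_eq fun u v => by
      rw [B.repr.dist_map, Subtype.dist_eq, dist_eq_norm, dist_eq_norm, sub_sub_sub_cancel_right]
      rfl
  have hgρ : ∀ v, dist (g v) 0 = ρ := fun v => by
    rw [dist_zero_right, B.repr.norm_map]
    exact hnorm v
  refine ⟨ρ, ?_, ?_, g, hg, 0, hgρ⟩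
  · obtain ⟨a, b, hab⟩ := exists_pair_ne V
    by_contra! hρ
    have hg0 : ∀ v, g v = 0 := fun v => dist_le_zero.mp ((hgρ v).trans_le hρ)
    exact hab (hg.1 ((hg0 a).trans (hg0 b).symm))
  · calc ρ ≤ √(r ^ 2) := Real.sqrt_le_sqrt (sub_le_self _ (by positivity))
      _ = r := Real.sqrt_sq hr0.le
      _ < 1 := hr1

lemma HasSphericalEmbedding.pos_dim [Nontrivial V] {n : ℕ} (h : HasSphericalEmbedding G n) :
    0 < n :=
  let ⟨_, _, _, _, hf, _⟩ := h
  hf.pos_dim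

end Spherical

section SphericalDim

variable {V : Type*} [Fintype V] {G : SimpleGraph V}

lemma sphericalDim_eq_zero [Subsingleton V] : sphericalDim G = 0 :=
  if_pos (Fintype.card_le_one_iff_subsingleton.mpr ‹_›)

lemma sphericalDim_le {n : ℕ} (h : HasSphericalEmbedding G n) : sphericalDim G ≤ n := by
  unfold sphericalDim
  split_ifs
  exacts [Nat.zero_le n, Nat.sInf_le h]

lemma hasSphericalEmbedding_sphericalDim [Nontrivial V] :
    HasSphericalEmbedding G (sphericalDim G) := by
  rw [sphericalDim, if_neg Fintype.one_lt_card.not_ge]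
  exact Nat.sInf_mem (s := {n | HasSphericalEmbedding G n}) ⟨_, hasSphericalEmbedding_card G⟩

end SphericalDim

/-- For every finite simple graph `G` with at least one vertex,
`sdim (G + K₁) > sdim G`. -/
theorem stmt16 (V : Type) [Fintype V] [Nonempty V] (G : SimpleGraph V) :
    sphericalDim G < sphericalDim (graphJoin G (⊤ : SimpleGraph (Fin 1))) := by
  have : Nontrivial (V ⊕ Fin 1) :=
    nontrivial_of_ne (Sum.inl (Classical.arbitrary V)) (Sum.inr 0) Sum.inl_ne_inr
  have hJ := hasSphericalEmbedding_sphericalDim (G := graphJoin G (⊤ : SimpleGraph (Fin 1)))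
  obtain ⟨m, hm⟩ := Nat.exists_eq_add_one_of_ne_zero hJ.pos_dim.ne'
  rw [hm] at hJ ⊢
  rcases subsingleton_or_nontrivial V with _ | _
  · rw [sphericalDim_eq_zero]
    exact m.succ_pos
  · exact Nat.lt_succ_of_le (sphericalDim_le hJ.of_graphJoin)
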